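/- arXiv:2501.14962 — 2 statements merged into one kernel-verified Lean document; each statement's English description precedes it below -/
import Mathlib

section
/- Let {ℓ_n} be a decreasing sequence in (0,1), {ω_n} i.i.d. uniform on 𝕋, and A ⊂ 𝕋 a set whose ε-covering numbers satisfy N(ε, A) ≤ ε^{−β} for all small ε > 0. If for some d ∈ (0,1) the series Σ_{n=1}^∞ (1/ℓ_n)^β exp(−n d ℓ_n) converges, then with probability one A ⊂ U(ω), where U(ω) = liminf_{n→∞} ∪_{k=1}^n B(ω_k, ℓ_n/2). -/
open MeasureTheory Filter ProbabilityTheory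
open scoped ENNReal

noncomputable def coveringNumber (ε : ℝ) (A : Set UnitAddCircle) : ℕ :=
  sInf {m : ℕ | ∃ s : Finset UnitAddCircle, s.card = m ∧ A ⊆ ⋃ x ∈ s, Metric.ball x ε}

/-!
Cover `A` at scale `n` by a net of `N(c ℓ_n, A) ≲ ℓ_n^{-β}` balls of radius `c ℓ_n`, with
`c ≤ (1 - d)/2`. If each ball of radius `d ℓ_n / 2` around a net point contains one of
`ω_0, …, ω_{n-1}`, the triangle inequality gives `A ⊆ E_n`. A fixed such ball is missed by all
`n` points with probability `(1 - d ℓ_n)^n ≤ exp(-n d ℓ_n)`, so the union bound over the net and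
the summability hypothesis let Borel–Cantelli conclude.
-/

lemma exists_finset_card_eq_coveringNumber (A : Set UnitAddCircle) {ε : ℝ} (hε : 0 < ε) :
    ∃ s : Finset UnitAddCircle, s.card = coveringNumber ε A ∧
      A ⊆ ⋃ x ∈ s, Metric.ball x ε := by
  obtain ⟨t, ht, hcover⟩ := Metric.totallyBounded_iff.mp
    (isCompact_univ (X := UnitAddCircle)).totallyBounded ε hε
  exact Nat.sInf_mem (s := {m | ∃ s : Finset UnitAddCircle, s.card = m ∧
    A ⊆ ⋃ x ∈ s, Metric.ball x ε})
    ⟨_, ht.toFinset, rfl, fun y _ => by simpa using hcover (Set.mem_univ y)⟩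

lemma UnitAddCircle.volume_compl_ball (p : UnitAddCircle) {r : ℝ} (hr0 : 0 ≤ r)
    (hr1 : 2 * r ≤ 1) : volume (Metric.ball p r)ᶜ = ENNReal.ofReal (1 - 2 * r) := by
  rw [measure_compl Metric.isOpen_ball.measurableSet (measure_ne_top _ _),
    ← measure_congr AddCircle.closedBall_ae_eq_ball, AddCircle.volume_closedBall,
    min_eq_right hr1, AddCircle.measure_univ, ENNReal.ofReal_one, ← ENNReal.ofReal_one,
    ← ENNReal.ofReal_sub _ (by positivity)]

lemma one_sub_pow_le_exp_neg_mul {t : ℝ} (ht : t ≤ 1) (n : ℕ) :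
    (1 - t) ^ n ≤ Real.exp (-(n * t)) := by
  calc (1 - t) ^ n ≤ Real.exp (-t) ^ n :=
        pow_le_pow_left₀ (by linarith) (Real.one_sub_le_exp_neg t) n
    _ = Real.exp (-(n * t)) := by rw [← Real.exp_nat_mul, mul_neg]

lemma ProbabilityTheory.iIndepFun.measure_biInter_preimage_eq_pow {Ω X ι : Type*}
    [MeasurableSpace Ω] [MeasurableSpace X] {μ : Measure Ω} {ν : Measure X} {ω : ι → Ω → X}
    (hindep : iIndepFun ω μ) (hmeas : ∀ k, Measurable (ω k)) (hident : ∀ k, μ.map (ω k) = ν)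
    {S : Set X} (hS : MeasurableSet S) (t : Finset ι) :
    μ (⋂ k ∈ t, ω k ⁻¹' S) = ν S ^ t.card := by
  rw [hindep.meas_biInter fun k _ => ⟨S, hS, rfl⟩, Finset.prod_congr rfl fun k _ => ?_,
    Finset.prod_const]
  rw [← hident k, Measure.map_apply (hmeas k) hS]

lemma measure_iUnion_ball_avoided_le {Ω : Type*} [MeasurableSpace Ω] {μ : Measure Ω}
    {ω : ℕ → Ω → UnitAddCircle} (hindep : iIndepFun ω μ) (hmeas : ∀ k, Measurable (ω k))
    (hunif : ∀ k, μ.map (ω k) = volume) (s : Finset UnitAddCircle) {a : ℝ} (ha0 : 0 ≤ a)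
    (ha1 : a ≤ 1) (n : ℕ) :
    μ (⋃ p ∈ s, ⋂ k ∈ Finset.range n, ω k ⁻¹' (Metric.ball p (a / 2))ᶜ) ≤
      ENNReal.ofReal (s.card * Real.exp (-n * a)) := by
  have hvol (p : UnitAddCircle) : volume (Metric.ball p (a / 2))ᶜ = ENNReal.ofReal (1 - a) := by
    rw [UnitAddCircle.volume_compl_ball p (by positivity) (by linarith),
      mul_div_cancel₀ a two_ne_zero]
  calc μ (⋃ p ∈ s, ⋂ k ∈ Finset.range n, ω k ⁻¹' (Metric.ball p (a / 2))ᶜ)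
      ≤ ∑ p ∈ s, μ (⋂ k ∈ Finset.range n, ω k ⁻¹' (Metric.ball p (a / 2))ᶜ) :=
        measure_biUnion_finset_le _ _
    _ = ∑ _p ∈ s, ENNReal.ofReal ((1 - a) ^ n) := by
        refine Finset.sum_congr rfl fun p _ => ?_
        rw [hindep.measure_biInter_preimage_eq_pow hmeas hunif
          Metric.isOpen_ball.measurableSet.compl, hvol, Finset.card_range,
          ENNReal.ofReal_pow (by linarith)]
    _ ≤ ENNReal.ofReal (s.card * Real.exp (-n * a)) := by
        rw [Finset.sum_const, nsmul_eq_mul, ← ENNReal.ofReal_natCast,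
          ← ENNReal.ofReal_mul (Nat.cast_nonneg _), neg_mul]
        gcongr
        exact one_sub_pow_le_exp_neg_mul ha1 n

lemma natCast_coveringNumber_mul_le {A : Set UnitAddCircle} {β ε₀ : ℝ}
    (hcov : ∀ ε ∈ Set.Ioo (0 : ℝ) ε₀, (coveringNumber ε A : ℝ) ≤ ε ^ (-β)) {c t : ℝ}
    (hc : 0 < c) (ht : 0 < t) (hct : c * t < ε₀) :
    (coveringNumber (c * t) A : ℝ) ≤ c ^ (-β) * (1 / t) ^ β := by
  rw [one_div, Real.inv_rpow ht.le, ← Real.rpow_neg ht.le, ← Real.mul_rpow hc.le ht.le]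
  exact hcov _ ⟨mul_pos hc ht, hct⟩

lemma ae_eventually_exists_mem_ball_of_tsum_ne_top {Ω X : Type*} [MeasurableSpace Ω]
    [PseudoMetricSpace X] {μ : Measure Ω} (ω : ℕ → Ω → X) {A : Set X} (s : ℕ → Finset X)
    {ρ r R : ℕ → ℝ} (hs : ∀ n, A ⊆ ⋃ p ∈ s n, Metric.ball p (ρ n))
    (hR : ∀ n, ρ n + r n ≤ R n)
    (hsum : ∑' n, μ (⋃ p ∈ s n, ⋂ k ∈ Finset.range n, ω k ⁻¹' (Metric.ball p (r n))ᶜ) ≠ ∞) :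
    ∀ᵐ x ∂μ, ∀ y ∈ A, ∀ᶠ n in atTop, ∃ k ∈ Finset.range n, y ∈ Metric.ball (ω k x) (R n) := by
  filter_upwards [ae_eventually_notMem hsum] with x hx y hy
  filter_upwards [hx] with n hn
  obtain ⟨p, hp, hyp⟩ := Set.mem_iUnion₂.mp (hs n hy)
  simp only [Set.mem_iUnion, Set.mem_iInter, Set.mem_preimage, Set.mem_compl_iff, not_exists,
    not_forall, not_not] at hn
  obtain ⟨k, hk, hkp⟩ := hn p hp
  refine ⟨k, hk, ?_⟩
  rw [Metric.mem_ball] at hyp hkp ⊢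
  calc dist y (ω k x) ≤ dist y p + dist (ω k x) p := dist_triangle_right _ _ _
    _ < ρ n + r n := add_lt_add hyp hkp
    _ ≤ R n := hR n

theorem stmt4_general {Ω : Type*} [MeasureSpace Ω]
    (ℓ : ℕ → ℝ) (hℓ : ∀ n, ℓ n ∈ Set.Ioo (0 : ℝ) 1)
    (ω : ℕ → Ω → UnitAddCircle) (hmeas : ∀ k, Measurable (ω k))
    (hunif : ∀ k, Measure.map (ω k) ℙ = volume)
    (hindep : iIndepFun ω ℙ)
    (A : Set UnitAddCircle) (β : ℝ)
    (hcov : ∃ ε₀ > 0, ∀ ε ∈ Set.Ioo (0 : ℝ) ε₀, (coveringNumber ε A : ℝ) ≤ ε ^ (-β))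
    (d : ℝ) (hd : d ∈ Set.Ioo (0 : ℝ) 1)
    (hsum : Summable fun n : ℕ => (1 / ℓ n) ^ β * Real.exp (-(n : ℝ) * d * ℓ n)) :
    ∀ᵐ x : Ω, ∀ y ∈ A, ∀ᶠ n in atTop,
      ∃ k ∈ Finset.range n, y ∈ Metric.ball (ω k x) (ℓ n / 2) := by
  obtain ⟨ε₀, hε₀, hcov⟩ := hcov
  obtain ⟨hd0, hd1⟩ := hd
  set c := min ((1 - d) / 2) (ε₀ / 2)
  have hc0 : 0 < c := lt_min (by linarith) (by linarith)
  choose net hnet_card hnet_cover using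
    fun n => exists_finset_card_eq_coveringNumber A (mul_pos hc0 (hℓ n).1)
  refine ae_eventually_exists_mem_ball_of_tsum_ne_top ω net (r := fun n => d * ℓ n / 2)
    hnet_cover (fun n => ?_) ?_
  · nlinarith [min_le_left ((1 - d) / 2) (ε₀ / 2), (hℓ n).1]
  refine ne_top_of_le_ne_top (hsum.mul_left (c ^ (-β))).tsum_ofReal_ne_top
    (ENNReal.tsum_le_tsum fun n => ?_)
  obtain ⟨hℓ0, hℓ1⟩ := hℓ n
  have hnet_card_le : ((net n).card : ℝ) ≤ c ^ (-β) * (1 / ℓ n) ^ β := by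
    rw [hnet_card n]
    refine natCast_coveringNumber_mul_le hcov hc0 hℓ0 ?_
    nlinarith [min_le_right ((1 - d) / 2) (ε₀ / 2)]
  refine (measure_iUnion_ball_avoided_le hindep hmeas hunif (net n) (by positivity)
    (by nlinarith) n).trans (ENNReal.ofReal_le_ofReal ?_)
  rw [← mul_assoc, ← mul_assoc]
  exact mul_le_mul_of_nonneg_right hnet_card_le (Real.exp_nonneg _)

/-- Theorem 1-2): if `N(ε, A) ≤ ε^{-β}` for small `ε` and
`∑ (1/ℓ n)^β exp(-n d ℓ n) < ∞` for some `d ∈ (0,1)`, then almost surely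
`A ⊆ U(ω) = liminf_n ⋃_{k ≤ n} B(ω k, ℓ n / 2)`. -/
theorem stmt4 {Ω : Type*} [MeasureSpace Ω] [IsProbabilityMeasure (ℙ : Measure Ω)]
    (ℓ : ℕ → ℝ) (hdec : Antitone ℓ) (hℓ : ∀ n, ℓ n ∈ Set.Ioo (0 : ℝ) 1)
    (ω : ℕ → Ω → UnitAddCircle) (hmeas : ∀ k, Measurable (ω k))
    (hunif : ∀ k, Measure.map (ω k) ℙ = volume)
    (hindep : iIndepFun ω ℙ)
    (A : Set UnitAddCircle) (β : ℝ) (hβ : 0 ≤ β)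
    (hcov : ∃ ε₀ > 0, ∀ ε ∈ Set.Ioo (0 : ℝ) ε₀, (coveringNumber ε A : ℝ) ≤ ε ^ (-β))
    (d : ℝ) (hd : d ∈ Set.Ioo (0 : ℝ) 1)
    (hsum : Summable fun n : ℕ => (1 / ℓ n) ^ β * Real.exp (-(n : ℝ) * d * ℓ n)) :
    ∀ᵐ x : Ω, ∀ y ∈ A, ∀ᶠ n in atTop,
      ∃ k ∈ Finset.range n, y ∈ Metric.ball (ω k x) (ℓ n / 2) :=
  stmt4_general ℓ hℓ ω hmeas hunif hindep A β hcov d hd hsum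
end

section
/- Let δ ∈ [0,1) and let {ℓ_n} be a decreasing sequence in (0,1) with liminf_{n→∞} (n ℓ_n / ln n) = δ. Then there exists a strictly increasing sequence of integers {n_k} such that the sequence L' defined by ℓ'_s = ℓ_{n_{k+1}} for n_k < s ≤ n_{k+1} satisfies limsup_{N→∞} (Σ_{s=1}^N ℓ'_s)/ln N ≤ δ. -/
/-!
Choose the block ends recursively so that `n k ≤ ε k * log (n (k + 1))` and
`n (k + 1) * ℓ (n (k + 1)) ≤ (δ + ε k) * log (n (k + 1))`; the liminf hypothesis makes the second
condition hold for infinitely many candidates. Since `ℓ' ≤ 1`, the partial sum up to `n (k + 1)`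
is then at most `n k + n (k + 1) * ℓ (n (k + 1)) ≤ (δ + 2 ε k) log (n (k + 1))`. Inside a block the
partial sum is affine in `N` and `log N` is concave, so the bounds at the two block ends give the
bound on the whole block.
-/

open Filter Real Finset Topology

open Classical in
/-- The value at `s` is `ℓ (n k)` for the least `k` with `s ≤ n k`; the `else` branch is never
taken when `n` is unbounded. -/
noncomputable def blockConst {M : Type*} [Zero M] (n : ℕ → ℕ) (ℓ : ℕ → M) (s : ℕ) : M :=
  if h : ∃ k, s ≤ n k then ℓ (n (Nat.find h)) else 0

section blockConst

variable {M : Type*} {n : ℕ → ℕ} {ℓ : ℕ → M}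

lemma blockConst_eq [Zero M] (hn : Monotone n) {k s : ℕ} (hk : n k < s) (hs : s ≤ n (k + 1)) :
    blockConst n ℓ s = ℓ (n (k + 1)) := by
  have h : ∃ j, s ≤ n j := ⟨k + 1, hs⟩
  rw [blockConst, dif_pos h, (Nat.find_eq_iff h).2 ⟨hs, fun j hj => ?_⟩]
  exact not_le.2 ((hn (Nat.lt_succ_iff.1 hj)).trans_lt hk)

lemma blockConst_id [Zero M] {s : ℕ} (hs : 1 ≤ s) : blockConst id ℓ s = ℓ s := by
  simpa [Nat.sub_add_cancel hs] using
    blockConst_eq (ℓ := ℓ) monotone_id (k := s - 1) (s := s) (by simp; omega) (by simp; omega)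

lemma blockConst_mem [Zero M] {T : Set M} (h0 : 0 ∈ T) (hT : ∀ m, ℓ m ∈ T) (s : ℕ) :
    blockConst n ℓ s ∈ T := by
  unfold blockConst
  split_ifs
  exacts [hT _, h0]

lemma sum_Icc_blockConst_of_mem [AddCommMonoid M] (hn : Monotone n) {k N : ℕ} (hk : n k ≤ N)
    (hN : N ≤ n (k + 1)) :
    ∑ s ∈ Icc 1 N, blockConst n ℓ s
      = ∑ s ∈ Icc 1 (n k), blockConst n ℓ s + (N - n k) • ℓ (n (k + 1)) := by
  change ∑ s ∈ Ioc 0 N, _ = ∑ s ∈ Ioc 0 (n k), _ + _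
  rw [← sum_Ioc_consecutive _ (Nat.zero_le _) hk,
    sum_congr rfl fun s hs => blockConst_eq hn (mem_Ioc.1 hs).1 ((mem_Ioc.1 hs).2.trans hN),
    sum_const, Nat.card_Ioc]

end blockConst

lemma add_mul_le_mul_log_of_le_of_le {C A c a b x : ℝ} (hC : 0 ≤ C) (ha : 0 < a)
    (hx : x ∈ Set.Icc a b) (hA : A ≤ C * log a) (hB : A + (b - a) * c ≤ C * log b) :
    A + (x - a) * c ≤ C * log x := by
  have hconc : ConcaveOn ℝ (Set.Ioi 0) fun y => C * log y - (A + (y - a) * c) := by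
    refine (strictConcaveOn_log_Ioi.concaveOn.smul hC).sub
      ⟨convex_Ioi 0, fun y _ z _ p q _ _ hpq => le_of_eq ?_⟩
    simp only [smul_eq_mul]
    linear_combination (a * c - A) * hpq
  have := hconc.min_le_of_mem_Icc ha (ha.trans_le (hx.1.trans hx.2)) hx
  simp only [sub_self, zero_mul, add_zero] at this
  linarith [(le_min (sub_nonneg.2 hA) (sub_nonneg.2 hB)).trans this]

lemma exists_strictMono_of_forall_exists_gt {P : ℕ → ℕ → ℕ → Prop}
    (h : ∀ k M, ∃ m, M < m ∧ P k M m) :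
    ∃ n : ℕ → ℕ, StrictMono n ∧ ∀ k, P k (n k) (n (k + 1)) := by
  choose g hg_gt hg using h
  let n : ℕ → ℕ := fun k => Nat.rec 0 g k
  exact ⟨n, strictMono_nat_of_lt_succ fun k => hg_gt k (n k), fun k => hg k (n k)⟩

lemma exists_gt_le_mul_log {δ ε : ℝ} {ℓ : ℕ → ℝ} (hε : 0 < ε)
    (hfreq : ∃ᶠ m : ℕ in atTop, m * ℓ m / log m < δ + ε) (M : ℕ) :
    ∃ m, M < m ∧ (M : ℝ) ≤ ε * log m ∧ m * ℓ m ≤ (δ + ε) * log m := by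
  have hlog : Tendsto (fun m : ℕ => ε * log m) atTop atTop :=
    (tendsto_log_atTop.comp tendsto_natCast_atTop_atTop).const_mul_atTop hε
  obtain ⟨m, hm, hMm, hM, hm2⟩ := (hfreq.and_eventually ((eventually_gt_atTop M).and
    ((hlog.eventually_ge_atTop M).and (eventually_ge_atTop 2)))).exists
  have hlog_pos : 0 < log m := log_pos (by exact_mod_cast hm2)
  exact ⟨m, hMm, hM, ((div_lt_iff₀ hlog_pos).1 hm).le⟩

def AdmissibleBlocks (δ : ℝ) (ε ℓ : ℕ → ℝ) (n : ℕ → ℕ) : Prop :=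
  ∀ k, (n k : ℝ) ≤ ε k * log (n (k + 1)) ∧
    (n (k + 1) : ℝ) * ℓ (n (k + 1)) ≤ (δ + ε k) * log (n (k + 1))

section blockBounds

variable {δ : ℝ} {ℓ : ℕ → ℝ} {n : ℕ → ℕ} {ε : ℕ → ℝ}

lemma sum_Icc_blockConst_le_of_block_end (hn : StrictMono n) (hℓ : ∀ m, ℓ m ∈ Set.Icc 0 1)
    (hsel : AdmissibleBlocks δ ε ℓ n) (k : ℕ) :
    ∑ s ∈ Icc 1 (n (k + 1)), blockConst n ℓ s ≤ (δ + 2 * ε k) * log (n (k + 1)) := by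
  have hk := hn (Nat.lt_succ_self k)
  rw [sum_Icc_blockConst_of_mem hn.monotone hk.le le_rfl, nsmul_eq_mul, Nat.cast_sub hk.le]
  have hprev : ∑ s ∈ Icc 1 (n k), blockConst n ℓ s ≤ n k :=
    (sum_le_card_nsmul _ _ 1 fun s _ => (blockConst_mem (by simp) hℓ s).2).trans (by simp)
  have hlast : ((n (k + 1) : ℝ) - n k) * ℓ (n (k + 1)) ≤ n (k + 1) * ℓ (n (k + 1)) :=
    mul_le_mul_of_nonneg_right (by simp) (hℓ _).1
  linarith [hsel k]

lemma sum_Icc_blockConst_le_of_mem (hn : StrictMono n) (hℓ : ∀ m, ℓ m ∈ Set.Icc 0 1)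
    (hsel : AdmissibleBlocks δ ε ℓ n) (hδ : 0 ≤ δ) (hε : Antitone ε) (hε_nonneg : ∀ k, 0 ≤ ε k)
    {k N : ℕ}
    (hN : N ∈ Set.Icc (n (k + 1)) (n (k + 2))) :
    ∑ s ∈ Icc 1 N, blockConst n ℓ s ≤ (δ + 2 * ε k) * log N := by
  have hk := hn (Nat.lt_succ_self (k + 1))
  have hsum : ∀ N' ∈ Set.Icc (n (k + 1)) (n (k + 2)), ∑ s ∈ Icc 1 N', blockConst n ℓ s =
      ∑ s ∈ Icc 1 (n (k + 1)), blockConst n ℓ s + ((N' : ℝ) - n (k + 1)) * ℓ (n (k + 2)) :=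
    fun N' hN' => by
      rw [sum_Icc_blockConst_of_mem hn.monotone hN'.1 hN'.2, nsmul_eq_mul, Nat.cast_sub hN'.1]
  have hend : ∑ s ∈ Icc 1 (n (k + 2)), blockConst n ℓ s ≤ (δ + 2 * ε k) * log (n (k + 2)) :=
    (sum_Icc_blockConst_le_of_block_end hn hℓ hsel (k + 1)).trans <|
      mul_le_mul_of_nonneg_right (by linarith [hε (Nat.le_succ k)]) (log_natCast_nonneg _)
  rw [hsum _ ⟨hk.le, le_rfl⟩] at hend
  rw [hsum N hN]
  exact add_mul_le_mul_log_of_le_of_le (by linarith [hε_nonneg k])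
    (by exact_mod_cast (Nat.zero_le _).trans_lt (hn (Nat.succ_pos k)))
    ⟨by exact_mod_cast hN.1, by exact_mod_cast hN.2⟩
    (sum_Icc_blockConst_le_of_block_end hn hℓ hsel k) hend

lemma eventually_sum_Icc_blockConst_div_log_le (hn : StrictMono n) (hℓ : ∀ m, ℓ m ∈ Set.Icc 0 1)
    (hsel : AdmissibleBlocks δ ε ℓ n) (hδ : 0 ≤ δ) (hε : Antitone ε) (hε_nonneg : ∀ k, 0 ≤ ε k)
    (j : ℕ) : ∀ᶠ N : ℕ in atTop, (∑ s ∈ Icc 1 N, blockConst n ℓ s) / log N ≤ δ + 2 * ε j := by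
  filter_upwards [eventually_gt_atTop (n (j + 1))] with N hN
  have hshift : StrictMono fun i => n (i + j + 1) := hn.comp fun a b h => by omega
  obtain ⟨i, hi, hNi⟩ :=
    hshift.exists_between_of_tendsto_atTop hshift.tendsto_atTop (by simpa using hN)
  have hbound := sum_Icc_blockConst_le_of_mem (k := i + j) hn hℓ hsel hδ hε hε_nonneg
    ⟨hi.le, by convert hNi using 2; ring⟩
  refine div_le_of_le_mul₀ (log_natCast_nonneg N) (by linarith [hε_nonneg j]) (hbound.trans ?_)
  exact mul_le_mul_of_nonneg_right (by linarith [hε (Nat.le_add_left j i)]) (log_natCast_nonneg N)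

lemma limsup_sum_Icc_blockConst_div_log_le (hn : StrictMono n) (hℓ : ∀ m, ℓ m ∈ Set.Icc 0 1)
    (hsel : AdmissibleBlocks δ ε ℓ n) (hδ : 0 ≤ δ) (hε : Antitone ε)
    (hε_lim : Tendsto ε atTop (𝓝 0)) :
    limsup (fun N : ℕ => (∑ s ∈ Icc 1 N, blockConst n ℓ s) / log N) atTop ≤ δ := by
  have hε_nonneg := hε.le_of_tendsto hε_lim
  have hcobdd : IsCoboundedUnder (· ≤ ·) atTop
      fun N : ℕ => (∑ s ∈ Icc 1 N, blockConst n ℓ s) / log N :=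
    isCoboundedUnder_le_of_le atTop fun N => div_nonneg
      (sum_nonneg fun s _ => (blockConst_mem (by simp) hℓ s).1) (log_natCast_nonneg N)
  have hlim : Tendsto (fun j => δ + 2 * ε j) atTop (𝓝 δ) := by
    simpa using (hε_lim.const_mul 2).const_add δ
  exact ge_of_tendsto' hlim fun j => limsup_le_of_le hcobdd
    (eventually_sum_Icc_blockConst_div_log_le hn hℓ hsel hδ hε hε_nonneg j)

end blockBounds

lemma tendsto_sum_Icc_div_log_atTop {ℓ : ℕ → ℝ} (hℓ : Antitone ℓ)
    (h : Tendsto (fun m : ℕ => m * ℓ m / log m) atTop atTop) :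
    Tendsto (fun N : ℕ => (∑ s ∈ Icc 1 N, ℓ s) / log N) atTop atTop := by
  refine tendsto_atTop_mono (fun N => div_le_div_of_nonneg_right ?_ (log_natCast_nonneg N)) h
  simpa using card_nsmul_le_sum (Icc 1 N) ℓ (ℓ N) fun s hs => hℓ (mem_Icc.1 hs).2

/-- Lemma on `D(L') ≤ δ`: if `liminf n ℓ n / ln n = δ ∈ [0,1)`, there is a strictly increasing
sequence of integers `n k` such that the block-constant sequence `ℓ' s = ℓ (n (k+1))` for
`n k < s ≤ n (k+1)` satisfies `limsup (∑_{s ≤ N} ℓ' s) / ln N ≤ δ`. -/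
theorem stmt5 (δ : ℝ) (hδ : δ ∈ Set.Ico (0 : ℝ) 1)
    (ℓ : ℕ → ℝ) (hdec : Antitone ℓ) (hℓ : ∀ m, ℓ m ∈ Set.Ioo (0 : ℝ) 1)
    (hliminf : liminf (fun m : ℕ => (m : ℝ) * ℓ m / Real.log m) atTop = δ) :
    ∃ n : ℕ → ℕ, StrictMono n ∧ ∃ ℓ' : ℕ → ℝ,
      (∀ k s, n k < s → s ≤ n (k + 1) → ℓ' s = ℓ (n (k + 1))) ∧
      limsup (fun N : ℕ => (∑ s ∈ Finset.Icc 1 N, ℓ' s) / Real.log N) atTop ≤ δ := by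
  by_cases hu : Tendsto (fun m : ℕ => (m : ℝ) * ℓ m / log m) atTop atTop
  · -- The normalized partial sums tend to `∞`, so `limsup` takes its junk value `0`.
    refine ⟨id, strictMono_id, blockConst id ℓ, fun k s => blockConst_eq monotone_id, ?_⟩
    have hsum (N : ℕ) : ∑ s ∈ Icc 1 N, blockConst id ℓ s = ∑ s ∈ Icc 1 N, ℓ s :=
      sum_congr rfl fun s hs => blockConst_id (mem_Icc.1 hs).1
    simp only [hsum]
    rw [Real.limsup_of_not_isBoundedUnder
      (not_isBoundedUnder_of_tendsto_atTop (tendsto_sum_Icc_div_log_atTop hdec hu))]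
    exact hδ.1
  · obtain ⟨b, hb⟩ : ∃ b, ∃ᶠ m : ℕ in atTop, (m : ℝ) * ℓ m / log m < b := by
      simpa only [tendsto_atTop, not_forall, not_eventually, not_le] using hu
    have hfreq (k : ℕ) : ∃ᶠ m : ℕ in atTop, (m : ℝ) * ℓ m / log m < δ + 1 / (k + 1) :=
      frequently_lt_of_liminf_lt (IsCoboundedUnder.of_frequently_le (hb.mono fun _ => le_of_lt))
        (by rw [hliminf]; exact lt_add_of_pos_right δ Nat.one_div_pos_of_nat)
    obtain ⟨n, hn, hsel⟩ := exists_strictMono_of_forall_exists_gt fun k =>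
      exists_gt_le_mul_log Nat.one_div_pos_of_nat (hfreq k)
    refine ⟨n, hn, blockConst n ℓ, fun k s => blockConst_eq hn.monotone, ?_⟩
    exact limsup_sum_Icc_blockConst_div_log_le hn (fun m => Set.Ioo_subset_Icc_self (hℓ m)) hsel
      hδ.1 (fun i j hij => Nat.one_div_le_one_div hij) tendsto_one_div_add_atTop_nhds_zero_nat
end
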